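/- Let ψ be a Drinfeld twist for a commutative Hopf algebra O(H) over a field k, and Q := Σ S(ψ¹)ψ². Let O(H)_ψ denote the coalgebra with comultiplication Δ_ψ(f) = Δ(f)ψ, and O(H)_{ψ^{-1}} the coalgebra with comultiplication Δ_{ψ^{-1}}(f) = Δ(f)ψ^{-1}. Then the map f ↦ S(f·Q^{-1}) is a coalgebra isomorphism from the co-opposite coalgebra (O(H)_ψ)^{cop} to O(H)_{ψ^{-1}}. -/

import Mathlib

open TensorProduct

/-- A Drinfeld twist for a commutative Hopf algebra `A` over `k`: an invertible element
`ψ ∈ A ⊗ A` satisfying `(Δ⊗id)(ψ)(ψ⊗1) = (id⊗Δ)(ψ)(1⊗ψ)` and `(ε⊗id)(ψ) = (id⊗ε)(ψ) = 1`. -/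
def IsDrinfeldTwist (k : Type*) {A : Type*} [CommSemiring k] [CommRing A]
    [HopfAlgebra k A] (ψ : A ⊗[k] A) : Prop :=
  IsUnit ψ ∧
  (Algebra.TensorProduct.assoc k k k A A A)
      ((LinearMap.rTensor A (Coalgebra.comul (R := k) (A := A))) ψ * (ψ ⊗ₜ[k] (1 : A)))
    = (LinearMap.lTensor A (Coalgebra.comul (R := k) (A := A))) ψ * ((1 : A) ⊗ₜ[k] ψ) ∧
  (TensorProduct.lid k A) ((LinearMap.rTensor A (Coalgebra.counit (R := k) (A := A))) ψ) = 1 ∧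
  (TensorProduct.rid k A) ((LinearMap.lTensor A (Coalgebra.counit (R := k) (A := A))) ψ) = 1

set_option maxHeartbeats 1000000
set_option synthInstance.maxHeartbeats 400000

section Conv
variable {k : Type*} [CommSemiring k]
variable {C : Type*} [AddCommMonoid C] [Module k C]
variable {B : Type*} [Semiring B] [Algebra k B]

/-- Convolution product on `C →ₗ[k] B` for coalgebra data `δc`. -/
noncomputable def conv (δc : C →ₗ[k] C ⊗[k] C) (f g : C →ₗ[k] B) : C →ₗ[k] B :=
  LinearMap.mul' k B ∘ₗ TensorProduct.map f g ∘ₗ δc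

lemma conv_apply (δc : C →ₗ[k] C ⊗[k] C) (f g : C →ₗ[k] B) (c : C) :
    conv δc f g c = LinearMap.mul' k B (TensorProduct.map f g (δc c)) := rfl

lemma conv_assoc (δc : C →ₗ[k] C ⊗[k] C)
    (hco : ∀ c : C, (TensorProduct.assoc k C C C) (TensorProduct.map δc LinearMap.id (δc c))
      = TensorProduct.map LinearMap.id δc (δc c))
    (f g h : C →ₗ[k] B) :
    conv δc (conv δc f g) h = conv δc f (conv δc g h) := by
  have key : (LinearMap.mul' k B ∘ₗ TensorProduct.map (LinearMap.mul' k B ∘ₗ TensorProduct.map f g) h)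
      = (LinearMap.mul' k B ∘ₗ TensorProduct.map f (LinearMap.mul' k B ∘ₗ TensorProduct.map g h)) ∘ₗ
        (TensorProduct.assoc k C C C).toLinearMap := by
    apply TensorProduct.ext_threefold; intro x y z; simp [mul_assoc]
  have comp1 : ∀ (x : C ⊗[k] C →ₗ[k] B) (y : C →ₗ[k] B) (w : C ⊗[k] C),
      TensorProduct.map (x ∘ₗ δc) y w = TensorProduct.map x y (TensorProduct.map δc LinearMap.id w) := by
    intro x y w
    rw [← LinearMap.comp_apply, ← TensorProduct.map_comp]
    simp
  have comp2 : ∀ (x : C ⊗[k] C →ₗ[k] B) (y : C →ₗ[k] B) (w : C ⊗[k] C),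
      TensorProduct.map y (x ∘ₗ δc) w = TensorProduct.map y x (TensorProduct.map LinearMap.id δc w) := by
    intro x y w
    rw [← LinearMap.comp_apply, ← TensorProduct.map_comp]
    simp
  ext c
  have l1 : conv δc (conv δc f g) h c
      = (LinearMap.mul' k B ∘ₗ TensorProduct.map (LinearMap.mul' k B ∘ₗ TensorProduct.map f g) h)
        (TensorProduct.map δc LinearMap.id (δc c)) := by
    rw [conv_apply]
    unfold conv
    rw [← LinearMap.comp_assoc, comp1]
    rfl
  have l2 : conv δc f (conv δc g h) c
      = (LinearMap.mul' k B ∘ₗ TensorProduct.map f (LinearMap.mul' k B ∘ₗ TensorProduct.map g h))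
        (TensorProduct.map LinearMap.id δc (δc c)) := by
    rw [conv_apply]
    unfold conv
    rw [← LinearMap.comp_assoc, comp2]
    rfl
  rw [l1, l2, ← hco c, key]
  rfl

lemma conv_one_left (δc : C →ₗ[k] C ⊗[k] C) (ec : C →ₗ[k] k)
    (hcu : ∀ c : C, TensorProduct.map ec LinearMap.id (δc c) = (1 : k) ⊗ₜ[k] c)
    (f : C →ₗ[k] B) :
    conv δc ((Algebra.linearMap k B) ∘ₗ ec) f = f := by
  ext c
  rw [conv_apply, show TensorProduct.map ((Algebra.linearMap k B) ∘ₗ ec) f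
      = TensorProduct.map (Algebra.linearMap k B) f ∘ₗ TensorProduct.map ec LinearMap.id by
        rw [← TensorProduct.map_comp]; simp, LinearMap.comp_apply, hcu c]
  simp

lemma conv_one_right (δc : C →ₗ[k] C ⊗[k] C) (ec : C →ₗ[k] k)
    (hcu : ∀ c : C, TensorProduct.map LinearMap.id ec (δc c) = c ⊗ₜ[k] (1 : k))
    (f : C →ₗ[k] B) :
    conv δc f ((Algebra.linearMap k B) ∘ₗ ec) = f := by
  ext c
  rw [conv_apply, show TensorProduct.map f ((Algebra.linearMap k B) ∘ₗ ec)
      = TensorProduct.map f (Algebra.linearMap k B) ∘ₗ TensorProduct.map LinearMap.id ec by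
        rw [← TensorProduct.map_comp]; simp, LinearMap.comp_apply, hcu c]
  simp

end Conv

section ConvHom
variable {k : Type*} [CommSemiring k]
variable {C : Type*} [AddCommMonoid C] [Module k C]
variable {B B' : Type*} [Semiring B] [Algebra k B] [Semiring B'] [Algebra k B']

lemma conv_algHom (δc : C →ₗ[k] C ⊗[k] C) (h : B →ₐ[k] B') (f g : C →ₗ[k] B) :
    h.toLinearMap ∘ₗ conv δc f g = conv δc (h.toLinearMap ∘ₗ f) (h.toLinearMap ∘ₗ g) := by
  ext c
  simp only [LinearMap.comp_apply, conv_apply]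
  rw [show TensorProduct.map (h.toLinearMap ∘ₗ f) (h.toLinearMap ∘ₗ g)
      = TensorProduct.map h.toLinearMap h.toLinearMap ∘ₗ TensorProduct.map f g from
    (TensorProduct.map_comp _ _ _ _)]
  rw [LinearMap.comp_apply]
  generalize TensorProduct.map f g (δc c) = w
  induction w using TensorProduct.induction_on with
  | zero => simp
  | tmul x y => simp
  | add x y hx hy => simp [map_add, hx, hy]

end ConvHom

section GeneralHopf
variable {k : Type*} [CommSemiring k]
variable {A : Type*} [Semiring A] [HopfAlgebra k A]

open Coalgebra HopfAlgebra Bialgebra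

local notation "δ" => Coalgebra.comul (R := k) (A := A)
local notation "ε" => Coalgebra.counit (R := k) (A := A)
local notation "𝒮" => HopfAlgebra.antipode (R := k) (A := A)
local notation "uA" => (Algebra.linearMap k A) ∘ₗ (Coalgebra.counit (R := k) (A := A))

lemma hcoA : ∀ a : A, (TensorProduct.assoc k A A A) (TensorProduct.map δ LinearMap.id (δ a))
    = TensorProduct.map LinearMap.id δ (δ a) := fun a => Coalgebra.coassoc_apply a

lemma hcuLA : ∀ a : A, TensorProduct.map ε LinearMap.id (δ a) = (1 : k) ⊗ₜ[k] a :=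
  fun a => Coalgebra.rTensor_counit_comul a

lemma hcuRA : ∀ a : A, TensorProduct.map LinearMap.id ε (δ a) = a ⊗ₜ[k] (1 : k) :=
  fun a => Coalgebra.lTensor_counit_comul a

lemma convSid : conv δ 𝒮 LinearMap.id = (Algebra.linearMap k A) ∘ₗ ε :=
  HopfAlgebra.mul_antipode_rTensor_comul

lemma convidS : conv δ LinearMap.id 𝒮 = (Algebra.linearMap k A) ∘ₗ ε :=
  HopfAlgebra.mul_antipode_lTensor_comul

lemma antipode_one' : 𝒮 (1 : A) = 1 := by
  have h := HopfAlgebra.mul_antipode_rTensor_comul_apply (R := k) (1 : A)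
  rw [Bialgebra.comul_one, Algebra.TensorProduct.one_def] at h
  simpa using h

lemma counit_antipode' : ∀ a : A, ε (𝒮 a) = ε a := by
  have h0 : (Bialgebra.counitAlgHom k A).toLinearMap = (Coalgebra.counit : A →ₗ[k] k) := rfl
  have h1 := conv_algHom δ (Bialgebra.counitAlgHom k A) LinearMap.id 𝒮
  rw [convidS, h0, LinearMap.comp_id] at h1
  have h2 : (Coalgebra.counit : A →ₗ[k] k) ∘ₗ ((Algebra.linearMap k A) ∘ₗ ε) = ε := by
    ext a; simp
  have hk : (Algebra.linearMap k k) ∘ₗ (Coalgebra.counit : A →ₗ[k] k) = ε := by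
    ext a; simp
  have h4 := conv_one_left (B := k) δ (Coalgebra.counit : A →ₗ[k] k) (by simpa using hcuLA)
    ((Coalgebra.counit : A →ₗ[k] k) ∘ₗ 𝒮)
  rw [hk] at h4
  have hfin : (Coalgebra.counit : A →ₗ[k] k) ∘ₗ 𝒮 = ε := h4.symm.trans (h1.symm.trans h2)
  intro a
  exact LinearMap.congr_fun hfin a

local notation "ιL" => AlgHom.toLinearMap (Algebra.TensorProduct.includeLeft : A →ₐ[k] A ⊗[k] A)
local notation "ιR" => AlgHom.toLinearMap (Algebra.TensorProduct.includeRight : A →ₐ[k] A ⊗[k] A)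

lemma conv_incl : conv δ ιL ιR = (Coalgebra.comul : A →ₗ[k] A ⊗[k] A) := by
  ext a
  rw [conv_apply]
  generalize (Coalgebra.comul (R := k) a) = w
  induction w using TensorProduct.induction_on with
  | zero => simp
  | tmul x y => simp [LinearMap.mul'_apply, Algebra.TensorProduct.tmul_mul_tmul]
  | add x y hx hy => simp only [map_add, hx, hy]

lemma u2L : ιL ∘ₗ ((Algebra.linearMap k A) ∘ₗ ε) = (Algebra.linearMap k (A ⊗[k] A)) ∘ₗ ε := by
  ext a
  simp only [LinearMap.comp_apply, Algebra.linearMap_apply, AlgHom.toLinearMap_apply]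
  exact AlgHom.commutes _ _

lemma u2R : ιR ∘ₗ ((Algebra.linearMap k A) ∘ₗ ε) = (Algebra.linearMap k (A ⊗[k] A)) ∘ₗ ε := by
  ext a
  simp only [LinearMap.comp_apply, Algebra.linearMap_apply, AlgHom.toLinearMap_apply]
  exact AlgHom.commutes _ _

lemma conv_iLS_comul : conv δ (ιL ∘ₗ 𝒮) (Coalgebra.comul : A →ₗ[k] A ⊗[k] A) = ιR := by
  nth_rewrite 2 [← conv_incl]
  rw [← conv_assoc δ hcoA]
  have h1 : conv δ (ιL ∘ₗ 𝒮) ιL = ιL ∘ₗ ((Algebra.linearMap k A) ∘ₗ ε) := by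
    have := conv_algHom δ (Algebra.TensorProduct.includeLeft : A →ₐ[k] A ⊗[k] A) 𝒮 LinearMap.id
    rw [convSid, LinearMap.comp_id] at this
    exact this.symm
  rw [h1, u2L]
  exact conv_one_left δ ε hcuLA _

lemma sigma_eq_conv : TensorProduct.map 𝒮 𝒮 ∘ₗ (TensorProduct.comm k A A).toLinearMap
      ∘ₗ (Coalgebra.comul : A →ₗ[k] A ⊗[k] A)
    = conv δ (ιR ∘ₗ 𝒮) (ιL ∘ₗ 𝒮) := by
  ext a
  rw [conv_apply]
  simp only [LinearMap.comp_apply]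
  generalize (Coalgebra.comul (R := k) a) = w
  induction w using TensorProduct.induction_on with
  | zero => simp
  | tmul x y => simp [LinearMap.mul'_apply, Algebra.TensorProduct.tmul_mul_tmul]
  | add x y hx hy => simp only [map_add, hx, hy]

lemma comul_antipode' : ((Coalgebra.comul : A →ₗ[k] A ⊗[k] A) ∘ₗ 𝒮)
    = TensorProduct.map 𝒮 𝒮 ∘ₗ (TensorProduct.comm k A A).toLinearMap
      ∘ₗ (Coalgebra.comul : A →ₗ[k] A ⊗[k] A) := by
  have h1 : conv δ (Coalgebra.comul : A →ₗ[k] A ⊗[k] A)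
      ((Coalgebra.comul : A →ₗ[k] A ⊗[k] A) ∘ₗ 𝒮)
      = (Algebra.linearMap k (A ⊗[k] A)) ∘ₗ ε := by
    have h := conv_algHom δ (Bialgebra.comulAlgHom k A) LinearMap.id 𝒮
    rw [convidS, LinearMap.comp_id] at h
    have h0 : (Bialgebra.comulAlgHom k A).toLinearMap = (Coalgebra.comul : A →ₗ[k] A ⊗[k] A) := rfl
    rw [h0] at h
    rw [← h]
    ext a
    simp
  have h2 : conv δ (TensorProduct.map 𝒮 𝒮 ∘ₗ (TensorProduct.comm k A A).toLinearMap
      ∘ₗ (Coalgebra.comul : A →ₗ[k] A ⊗[k] A)) (Coalgebra.comul : A →ₗ[k] A ⊗[k] A)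
      = (Algebra.linearMap k (A ⊗[k] A)) ∘ₗ ε := by
    rw [sigma_eq_conv, conv_assoc δ hcoA, conv_iLS_comul]
    have := conv_algHom δ (Algebra.TensorProduct.includeRight : A →ₐ[k] A ⊗[k] A) 𝒮 LinearMap.id
    rw [convSid, LinearMap.comp_id] at this
    rw [← this, u2R]
  calc ((Coalgebra.comul : A →ₗ[k] A ⊗[k] A) ∘ₗ 𝒮)
      = conv δ ((Algebra.linearMap k (A ⊗[k] A)) ∘ₗ ε)
          ((Coalgebra.comul : A →ₗ[k] A ⊗[k] A) ∘ₗ 𝒮) := (conv_one_left δ ε hcuLA _).symm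
    _ = conv δ (conv δ (TensorProduct.map 𝒮 𝒮 ∘ₗ (TensorProduct.comm k A A).toLinearMap
          ∘ₗ (Coalgebra.comul : A →ₗ[k] A ⊗[k] A)) (Coalgebra.comul : A →ₗ[k] A ⊗[k] A))
          ((Coalgebra.comul : A →ₗ[k] A ⊗[k] A) ∘ₗ 𝒮) := by rw [h2]
    _ = conv δ (TensorProduct.map 𝒮 𝒮 ∘ₗ (TensorProduct.comm k A A).toLinearMap
          ∘ₗ (Coalgebra.comul : A →ₗ[k] A ⊗[k] A))
          (conv δ (Coalgebra.comul : A →ₗ[k] A ⊗[k] A)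
            ((Coalgebra.comul : A →ₗ[k] A ⊗[k] A) ∘ₗ 𝒮)) := conv_assoc δ hcoA _ _ _
    _ = conv δ (TensorProduct.map 𝒮 𝒮 ∘ₗ (TensorProduct.comm k A A).toLinearMap
          ∘ₗ (Coalgebra.comul : A →ₗ[k] A ⊗[k] A)) ((Algebra.linearMap k (A ⊗[k] A)) ∘ₗ ε) := by
        rw [h1]
    _ = _ := conv_one_right δ ε hcuRA _

end GeneralHopf

section CommHopf
variable {k : Type*} [CommSemiring k]
variable {A : Type*} [CommSemiring A] [HopfAlgebra k A]

open Coalgebra HopfAlgebra Bialgebra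

local notation "δ" => Coalgebra.comul (R := k) (A := A)
local notation "ε" => Coalgebra.counit (R := k) (A := A)
local notation "𝒮" => HopfAlgebra.antipode (R := k) (A := A)
local notation "μ" => LinearMap.mul' k A
local notation "ttc" => LinearEquiv.toLinearMap (TensorProduct.tensorTensorTensorComm k A A A A)
local notation "δ₂" => LinearMap.comp ttc (TensorProduct.map (Coalgebra.comul (R := k) (A := A)) (Coalgebra.comul (R := k) (A := A)))
local notation "ε₂" => LinearMap.comp (LinearMap.mul' k k) (TensorProduct.map (Coalgebra.counit (R := k) (A := A)) (Coalgebra.counit (R := k) (A := A)))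
local notation "Θ" => LinearMap.comp (LinearMap.lTensor (A ⊗[k] A) (LinearEquiv.toLinearMap (TensorProduct.tensorTensorTensorComm k A A A A))) (LinearEquiv.toLinearMap (TensorProduct.tensorTensorTensorComm k A (A ⊗[k] A) A (A ⊗[k] A)))

lemma hco2 : ∀ w : A ⊗[k] A,
    (TensorProduct.assoc k (A ⊗[k] A) (A ⊗[k] A) (A ⊗[k] A))
      (TensorProduct.map δ₂ LinearMap.id (δ₂ w)) = TensorProduct.map LinearMap.id δ₂ (δ₂ w) := by
  have claim2 : ∀ (p r : A ⊗[k] A) (y w : A),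
      (TensorProduct.assoc k (A ⊗[k] A) (A ⊗[k] A) (A ⊗[k] A))
        ((TensorProduct.tensorTensorTensorComm k A A A A (p ⊗ₜ r)) ⊗ₜ (y ⊗ₜ[k] w))
      = Θ ((TensorProduct.assoc k A A A (p ⊗ₜ y)) ⊗ₜ (TensorProduct.assoc k A A A (r ⊗ₜ w))) := by
    intro p r y w
    induction p using TensorProduct.induction_on with
    | zero => simp
    | add p1 p2 h1 h2 =>
      simp only [add_tmul, tmul_add, map_add] at h1 h2 ⊢
      rw [h1, h2]
    | tmul p1 p2 =>
      induction r using TensorProduct.induction_on with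
      | zero => simp
      | add r1 r2 h1 h2 =>
        simp only [add_tmul, tmul_add, map_add] at h1 h2 ⊢
        rw [h1, h2]
      | tmul r1 r2 => simp
  have sub1 : ∀ (s t : A ⊗[k] A),
      (TensorProduct.assoc k (A ⊗[k] A) (A ⊗[k] A) (A ⊗[k] A))
        (TensorProduct.map δ₂ LinearMap.id (TensorProduct.tensorTensorTensorComm k A A A A (s ⊗ₜ t)))
      = Θ ((TensorProduct.assoc k A A A (TensorProduct.map δ LinearMap.id s)) ⊗ₜ
          (TensorProduct.assoc k A A A (TensorProduct.map δ LinearMap.id t))) := by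
    intro s t
    induction s using TensorProduct.induction_on with
    | zero => simp
    | add s1 s2 h1 h2 =>
      simp only [add_tmul, tmul_add, map_add] at h1 h2 ⊢
      rw [h1, h2]
    | tmul x y =>
      induction t using TensorProduct.induction_on with
      | zero => simp
      | add t1 t2 h1 h2 =>
        simp only [add_tmul, tmul_add, map_add] at h1 h2 ⊢
        rw [h1, h2]
      | tmul z w =>
        rw [TensorProduct.tensorTensorTensorComm_tmul, TensorProduct.map_tmul]
        have : (δ₂) (x ⊗ₜ[k] z) = TensorProduct.tensorTensorTensorComm k A A A A
            ((δ x) ⊗ₜ (δ z)) := by simp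
        rw [this, LinearMap.id_apply, claim2, TensorProduct.map_tmul, TensorProduct.map_tmul,
          LinearMap.id_apply, LinearMap.id_apply]
  have sub2 : ∀ (s t : A ⊗[k] A),
      TensorProduct.map LinearMap.id δ₂ (TensorProduct.tensorTensorTensorComm k A A A A (s ⊗ₜ t))
      = Θ ((TensorProduct.map LinearMap.id δ s) ⊗ₜ (TensorProduct.map LinearMap.id δ t)) := by
    intro s t
    induction s using TensorProduct.induction_on with
    | zero => simp
    | add s1 s2 h1 h2 =>
      simp only [add_tmul, tmul_add, map_add] at h1 h2 ⊢
      rw [h1, h2]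
    | tmul x y =>
      induction t using TensorProduct.induction_on with
      | zero => simp
      | add t1 t2 h1 h2 =>
        simp only [add_tmul, tmul_add, map_add] at h1 h2 ⊢
        rw [h1, h2]
      | tmul z w => simp
  intro w
  induction w using TensorProduct.induction_on with
  | zero => simp
  | add w1 w2 h1 h2 => simp only [map_add, h1, h2]
  | tmul a b =>
    have e1 : (δ₂) (a ⊗ₜ[k] b) = TensorProduct.tensorTensorTensorComm k A A A A
        ((δ a) ⊗ₜ (δ b)) := by simp
    rw [e1, sub1, hcoA (k := k) a, hcoA (k := k) b, ← sub2]

lemma hcuL2 : ∀ w : A ⊗[k] A,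
    TensorProduct.map ε₂ LinearMap.id (δ₂ w) = (1 : k) ⊗ₜ[k] w := by
  have sub : ∀ (s t : A ⊗[k] A),
      TensorProduct.map ε₂ LinearMap.id (TensorProduct.tensorTensorTensorComm k A A A A (s ⊗ₜ t))
      = (LinearMap.rTensor (A ⊗[k] A) (LinearMap.mul' k k))
          ((TensorProduct.tensorTensorTensorComm k k A k A)
            ((TensorProduct.map ε LinearMap.id s) ⊗ₜ (TensorProduct.map ε LinearMap.id t))) := by
    intro s t
    induction s using TensorProduct.induction_on with
    | zero => simp
    | add s1 s2 h1 h2 =>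
      simp only [add_tmul, tmul_add, map_add] at h1 h2 ⊢
      rw [h1, h2]
    | tmul x y =>
      induction t using TensorProduct.induction_on with
      | zero => simp
      | add t1 t2 h1 h2 =>
        simp only [add_tmul, tmul_add, map_add] at h1 h2 ⊢
        rw [h1, h2]
      | tmul z w => simp [LinearMap.mul'_apply]
  intro w
  induction w using TensorProduct.induction_on with
  | zero => simp
  | add w1 w2 h1 h2 =>
    simp only [map_add, h1, h2, TensorProduct.tmul_add]
  | tmul a b =>
    have : (δ₂) (a ⊗ₜ[k] b) = TensorProduct.tensorTensorTensorComm k A A A A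
        ((δ a) ⊗ₜ (δ b)) := by simp
    rw [this, sub, hcuLA (k := k) a, hcuLA (k := k) b]
    simp [LinearMap.mul'_apply]

lemma hcuR2 : ∀ w : A ⊗[k] A,
    TensorProduct.map LinearMap.id ε₂ (δ₂ w) = w ⊗ₜ[k] (1 : k) := by
  have sub : ∀ (s t : A ⊗[k] A),
      TensorProduct.map LinearMap.id ε₂ (TensorProduct.tensorTensorTensorComm k A A A A (s ⊗ₜ t))
      = (LinearMap.lTensor (A ⊗[k] A) (LinearMap.mul' k k))
          ((TensorProduct.tensorTensorTensorComm k A k A k)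
            ((TensorProduct.map LinearMap.id ε s) ⊗ₜ (TensorProduct.map LinearMap.id ε t))) := by
    intro s t
    induction s using TensorProduct.induction_on with
    | zero => simp
    | add s1 s2 h1 h2 =>
      simp only [add_tmul, tmul_add, map_add] at h1 h2 ⊢
      rw [h1, h2]
    | tmul x y =>
      induction t using TensorProduct.induction_on with
      | zero => simp
      | add t1 t2 h1 h2 =>
        simp only [add_tmul, tmul_add, map_add] at h1 h2 ⊢
        rw [h1, h2]
      | tmul z w => simp [LinearMap.mul'_apply]
  intro w
  induction w using TensorProduct.induction_on with
  | zero => simp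
  | add w1 w2 h1 h2 =>
    simp only [map_add, h1, h2, TensorProduct.add_tmul]
  | tmul a b =>
    have : (δ₂) (a ⊗ₜ[k] b) = TensorProduct.tensorTensorTensorComm k A A A A
        ((δ a) ⊗ₜ (δ b)) := by simp
    rw [this, sub, hcuRA (k := k) a, hcuRA (k := k) b]
    simp [LinearMap.mul'_apply]

lemma conv2_m1 : conv δ₂ (𝒮 ∘ₗ μ) μ = (Algebra.linearMap k A) ∘ₗ ε₂ := by
  have mm : ∀ w : A ⊗[k] A, TensorProduct.map μ μ (δ₂ w) = δ (μ w) := by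
    have sub : ∀ (s t : A ⊗[k] A),
        TensorProduct.map μ μ (TensorProduct.tensorTensorTensorComm k A A A A (s ⊗ₜ t))
        = s * t := by
      intro s t
      induction s using TensorProduct.induction_on with
      | zero => simp
      | add s1 s2 h1 h2 =>
        simp only [add_tmul, tmul_add, map_add, add_mul] at h1 h2 ⊢
        rw [h1, h2]
      | tmul x y =>
        induction t using TensorProduct.induction_on with
        | zero => simp
        | add t1 t2 h1 h2 =>
          simp only [add_tmul, tmul_add, map_add, mul_add] at h1 h2 ⊢
          rw [h1, h2]
        | tmul z w => simp [LinearMap.mul'_apply, Algebra.TensorProduct.tmul_mul_tmul]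
    intro w
    induction w using TensorProduct.induction_on with
    | zero => simp
    | add w1 w2 h1 h2 => simp only [map_add, h1, h2]
    | tmul a b =>
      have : (δ₂) (a ⊗ₜ[k] b) = TensorProduct.tensorTensorTensorComm k A A A A
          ((δ a) ⊗ₜ (δ b)) := by simp
      rw [this, sub, ← Bialgebra.comul_mul, LinearMap.mul'_apply]
  refine LinearMap.ext fun w => ?_
  rw [conv_apply]
  rw [show TensorProduct.map (𝒮 ∘ₗ μ) μ = TensorProduct.map 𝒮 LinearMap.id ∘ₗ
    TensorProduct.map μ μ from by rw [← TensorProduct.map_comp]; simp]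
  rw [LinearMap.comp_apply, mm w]
  have : μ (TensorProduct.map 𝒮 LinearMap.id (δ (μ w))) = algebraMap k A (ε (μ w)) :=
    HopfAlgebra.mul_antipode_rTensor_comul_apply (μ w)
  rw [this]
  have ec : ∀ w : A ⊗[k] A, ε (μ w) = ε₂ w := by
    intro w
    induction w using TensorProduct.induction_on with
    | zero => simp
    | add w1 w2 h1 h2 => simp only [map_add, h1, h2]
    | tmul a b => simp [LinearMap.mul'_apply]
  rw [ec w]
  rfl

lemma conv2_m2 : conv δ₂ μ (μ ∘ₗ TensorProduct.map 𝒮 𝒮) = (Algebra.linearMap k A) ∘ₗ ε₂ := by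
  have sub : ∀ (s t : A ⊗[k] A),
      μ (TensorProduct.map μ (μ ∘ₗ TensorProduct.map 𝒮 𝒮)
        (TensorProduct.tensorTensorTensorComm k A A A A (s ⊗ₜ t)))
      = (μ (TensorProduct.map LinearMap.id 𝒮 s)) * (μ (TensorProduct.map LinearMap.id 𝒮 t)) := by
    intro s t
    induction s using TensorProduct.induction_on with
    | zero => simp
    | add s1 s2 h1 h2 =>
      simp only [add_tmul, tmul_add, map_add, add_mul] at h1 h2 ⊢
      rw [h1, h2]
    | tmul x y =>
      induction t using TensorProduct.induction_on with
      | zero => simp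
      | add t1 t2 h1 h2 =>
        simp only [add_tmul, tmul_add, map_add, mul_add] at h1 h2 ⊢
        rw [h1, h2]
      | tmul z w =>
        simp only [TensorProduct.tensorTensorTensorComm_tmul, TensorProduct.map_tmul,
          LinearMap.mul'_apply, LinearMap.comp_apply, LinearMap.id_apply]
        ring
  refine LinearMap.ext fun w => ?_
  rw [conv_apply]
  induction w using TensorProduct.induction_on with
  | zero => simp
  | add w1 w2 h1 h2 => simp only [map_add, h1, h2]
  | tmul a b =>
    have : (δ₂) (a ⊗ₜ[k] b) = TensorProduct.tensorTensorTensorComm k A A A A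
        ((δ a) ⊗ₜ (δ b)) := by simp
    rw [this, sub]
    have ha : μ (TensorProduct.map LinearMap.id 𝒮 (δ a)) = algebraMap k A (ε a) :=
      HopfAlgebra.mul_antipode_lTensor_comul_apply a
    have hb : μ (TensorProduct.map LinearMap.id 𝒮 (δ b)) = algebraMap k A (ε b) :=
      HopfAlgebra.mul_antipode_lTensor_comul_apply b
    rw [ha, hb, ← map_mul]
    simp [LinearMap.mul'_apply]

lemma antipode_mul_linear : (𝒮 ∘ₗ μ : A ⊗[k] A →ₗ[k] A) = μ ∘ₗ TensorProduct.map 𝒮 𝒮 := by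
  calc (𝒮 ∘ₗ μ : A ⊗[k] A →ₗ[k] A)
      = conv δ₂ (𝒮 ∘ₗ μ) ((Algebra.linearMap k A) ∘ₗ ε₂) :=
        (conv_one_right δ₂ ε₂ hcuR2 _).symm
    _ = conv δ₂ (𝒮 ∘ₗ μ) (conv δ₂ μ (μ ∘ₗ TensorProduct.map 𝒮 𝒮)) := by rw [conv2_m2]
    _ = conv δ₂ (conv δ₂ (𝒮 ∘ₗ μ) μ) (μ ∘ₗ TensorProduct.map 𝒮 𝒮) :=
        (conv_assoc δ₂ hco2 _ _ _).symm
    _ = conv δ₂ ((Algebra.linearMap k A) ∘ₗ ε₂) (μ ∘ₗ TensorProduct.map 𝒮 𝒮) := by rw [conv2_m1]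
    _ = μ ∘ₗ TensorProduct.map 𝒮 𝒮 := conv_one_left δ₂ ε₂ hcuL2 _

lemma antipode_mul' (x y : A) : 𝒮 (x * y) = 𝒮 x * 𝒮 y := by
  have := LinearMap.congr_fun (antipode_mul_linear (k := k) (A := A)) (x ⊗ₜ y)
  simpa [LinearMap.mul'_apply] using this

lemma antipode_antipode' : ∀ a : A, 𝒮 (𝒮 a) = a := by
  have h1 : conv δ (𝒮 ∘ₗ 𝒮) 𝒮 = (Algebra.linearMap k A) ∘ₗ ε := by
    ext a
    rw [conv_apply]
    rw [show TensorProduct.map (𝒮 ∘ₗ 𝒮) 𝒮 = TensorProduct.map 𝒮 𝒮 ∘ₗ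
      TensorProduct.map 𝒮 LinearMap.id from by rw [← TensorProduct.map_comp]; simp]
    rw [LinearMap.comp_apply, ← LinearMap.comp_apply (LinearMap.mul' k A),
      ← antipode_mul_linear, LinearMap.comp_apply]
    have : μ (TensorProduct.map 𝒮 LinearMap.id (δ a)) = algebraMap k A (ε a) :=
      HopfAlgebra.mul_antipode_rTensor_comul_apply a
    rw [this]
    simp [Algebra.algebraMap_eq_smul_one, map_smul, antipode_one']
  have hfin : (𝒮 ∘ₗ 𝒮 : A →ₗ[k] A) = LinearMap.id := by
    calc (𝒮 ∘ₗ 𝒮 : A →ₗ[k] A)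
        = conv δ (𝒮 ∘ₗ 𝒮) ((Algebra.linearMap k A) ∘ₗ ε) := (conv_one_right δ ε hcuRA _).symm
      _ = conv δ (𝒮 ∘ₗ 𝒮) (conv δ 𝒮 LinearMap.id) := by rw [convSid]
      _ = conv δ (conv δ (𝒮 ∘ₗ 𝒮) 𝒮) LinearMap.id := (conv_assoc δ hcoA _ _ _).symm
      _ = conv δ ((Algebra.linearMap k A) ∘ₗ ε) LinearMap.id := by rw [h1]
      _ = LinearMap.id := conv_one_left δ ε hcuLA _
  intro a
  exact LinearMap.congr_fun hfin a

end CommHopf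

section Main
variable {k A : Type*} [Field k] [CommRing A] [HopfAlgebra k A]

open Coalgebra HopfAlgebra Bialgebra

local notation "δ" => Coalgebra.comul (R := k) (A := A)
local notation "ε" => Coalgebra.counit (R := k) (A := A)
local notation "𝒮" => HopfAlgebra.antipode (R := k) (A := A)
local notation "μ" => LinearMap.mul' k A

noncomputable def Sa : A →ₐ[k] A :=
  AlgHom.ofLinearMap 𝒮 antipode_one' antipode_mul'

noncomputable def phiA : A ⊗[k] A →ₐ[k] A :=
  Algebra.TensorProduct.lift Sa (AlgHom.id k A) (fun x y => mul_comm _ _)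

noncomputable def sigA : A ⊗[k] A →ₐ[k] A ⊗[k] A :=
  (Algebra.TensorProduct.map Sa Sa).comp (Algebra.TensorProduct.comm k A A).toAlgHom

noncomputable def gamA : A ⊗[k] A →ₐ[k] A ⊗[k] A :=
  Algebra.TensorProduct.lift (Algebra.TensorProduct.includeLeft.comp Sa)
    (Bialgebra.comulAlgHom k A) (fun x y => mul_comm _ _)

noncomputable def alpA : A ⊗[k] (A ⊗[k] A) →ₐ[k] A ⊗[k] A :=
  Algebra.TensorProduct.lift (Algebra.TensorProduct.includeRight.comp Sa)
    gamA (fun x y => mul_comm _ _)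

noncomputable def betA : A ⊗[k] (A ⊗[k] A) →ₐ[k] A ⊗[k] A :=
  Algebra.TensorProduct.lift (Algebra.TensorProduct.includeLeft.comp Sa)
    (AlgHom.id k (A ⊗[k] A)) (fun x y => mul_comm _ _)

lemma phiA_eq (w : A ⊗[k] A) : phiA w = μ (TensorProduct.map 𝒮 LinearMap.id w) := by
  induction w using TensorProduct.induction_on with
  | zero => simp
  | tmul x y => simp [phiA, Sa, Algebra.TensorProduct.lift_tmul, LinearMap.mul'_apply]
  | add x y hx hy => simp only [map_add, hx, hy]

lemma phiA_comul (a : A) : phiA (δ a) = algebraMap k A (ε a) := by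
  rw [phiA_eq]
  exact HopfAlgebra.mul_antipode_rTensor_comul_apply a

lemma sigA_tmul (x y : A) : sigA (x ⊗ₜ[k] y) = 𝒮 y ⊗ₜ[k] 𝒮 x := by
  simp [sigA, Sa, Algebra.TensorProduct.comm_tmul]

lemma sigA_comul (a : A) : sigA (δ a) = δ (𝒮 a) := by
  have h1 := LinearMap.congr_fun (comul_antipode' (k := k) (A := A)) a
  simp only [LinearMap.comp_apply] at h1
  rw [h1]
  generalize (Coalgebra.comul (R := k) a) = w
  induction w using TensorProduct.induction_on with
  | zero => simp
  | tmul x y => simp [sigA_tmul, TensorProduct.comm_tmul]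
  | add x y hx hy => simp only [map_add, hx, hy]

lemma sigA_sigA (w : A ⊗[k] A) : sigA (sigA w) = w := by
  induction w using TensorProduct.induction_on with
  | zero => simp
  | tmul x y => simp [sigA_tmul, antipode_antipode']
  | add x y hx hy => simp only [map_add, hx, hy]

lemma gamA_tmul (x : A) (t : A) : gamA (x ⊗ₜ[k] t) = ((𝒮 x) ⊗ₜ[k] (1:A)) * δ t := by
  simp [gamA, Sa, Algebra.TensorProduct.lift_tmul]

lemma gamA_comul (a : A) : gamA (δ a) = (1:A) ⊗ₜ[k] a := by
  have h1 := LinearMap.congr_fun (conv_iLS_comul (k := k) (A := A)) a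
  rw [conv_apply] at h1
  simp only [AlgHom.toLinearMap_apply, Algebra.TensorProduct.includeRight_apply] at h1
  rw [← h1]
  generalize (Coalgebra.comul (R := k) a) = w
  induction w using TensorProduct.induction_on with
  | zero => simp
  | tmul x y =>
    rw [gamA_tmul]
    simp [LinearMap.mul'_apply]
  | add x y hx hy => simp only [map_add, hx, hy]

end Main

section Main2
variable {k A : Type*} [Field k] [CommRing A] [HopfAlgebra k A]

open Coalgebra HopfAlgebra Bialgebra

local notation "δ" => Coalgebra.comul (R := k) (A := A)
local notation "ε" => Coalgebra.counit (R := k) (A := A)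
local notation "𝒮" => HopfAlgebra.antipode (R := k) (A := A)
local notation "μ" => LinearMap.mul' k A
local notation "ass" => Algebra.TensorProduct.assoc k k k A A A

lemma betA_tmul (x : A) (t : A ⊗[k] A) : betA (x ⊗ₜ[k] t) = ((𝒮 x) ⊗ₜ[k] (1:A)) * t := by
  simp [betA, Sa, Algebra.TensorProduct.lift_tmul]

lemma alpA_tmul (x : A) (t : A ⊗[k] A) : alpA (x ⊗ₜ[k] t) = ((1:A) ⊗ₜ[k] (𝒮 x)) * gamA t := by
  simp [alpA, Sa, Algebra.TensorProduct.lift_tmul]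

lemma betA_assoc (t : A ⊗[k] A) (y : A) :
    betA (ass (t ⊗ₜ[k] y)) = (phiA t) ⊗ₜ[k] y := by
  induction t using TensorProduct.induction_on with
  | zero => simp
  | tmul p q =>
    rw [Algebra.TensorProduct.assoc_tmul, betA_tmul]
    simp [phiA, Sa, Algebra.TensorProduct.lift_tmul, Algebra.TensorProduct.tmul_mul_tmul]
  | add s t hs ht =>
    simp only [TensorProduct.add_tmul, map_add, hs, ht]

lemma alpA_assoc (t : A ⊗[k] A) (y : A) :
    alpA (ass (t ⊗ₜ[k] y)) = sigA t * δ y := by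
  induction t using TensorProduct.induction_on with
  | zero => simp
  | tmul p q =>
    rw [Algebra.TensorProduct.assoc_tmul, alpA_tmul, gamA_tmul, sigA_tmul]
    rw [← mul_assoc]
    congr 1
    rw [Algebra.TensorProduct.tmul_mul_tmul, one_mul, mul_one]
  | add s t hs ht =>
    simp only [TensorProduct.add_tmul, map_add, hs, ht, add_mul]

lemma betA_rTensor (w : A ⊗[k] A) :
    betA (ass (LinearMap.rTensor A δ w))
      = TensorProduct.map ((Algebra.linearMap k A) ∘ₗ ε) LinearMap.id w := by
  induction w using TensorProduct.induction_on with
  | zero => simp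
  | tmul x y =>
    rw [LinearMap.rTensor_tmul, betA_assoc, phiA_comul]
    simp
  | add x y hx hy => simp only [map_add, hx, hy]

lemma alpA_rTensor (w : A ⊗[k] A) :
    alpA (ass (LinearMap.rTensor A δ w)) = (Bialgebra.comulAlgHom k A) (phiA w) := by
  induction w using TensorProduct.induction_on with
  | zero => simp
  | tmul x y =>
    rw [LinearMap.rTensor_tmul, alpA_assoc, sigA_comul]
    simp only [comulAlgHom_apply]
    rw [← Bialgebra.comul_mul]
    congr 1
  | add x y hx hy => simp only [map_add, hx, hy]

lemma betA_lTensor (w : A ⊗[k] A) :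
    betA (LinearMap.lTensor A δ w) = gamA w := by
  induction w using TensorProduct.induction_on with
  | zero => simp
  | tmul x y => rw [LinearMap.lTensor_tmul, betA_tmul, gamA_tmul]
  | add x y hx hy => simp only [map_add, hx, hy]

lemma alpA_lTensor (w : A ⊗[k] A) :
    alpA (LinearMap.lTensor A δ w) = (1:A) ⊗ₜ[k] (phiA w) := by
  induction w using TensorProduct.induction_on with
  | zero => simp
  | tmul x y =>
    rw [LinearMap.lTensor_tmul, alpA_tmul, gamA_comul]
    simp [phiA, Sa, Algebra.TensorProduct.lift_tmul, Algebra.TensorProduct.tmul_mul_tmul]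
  | add x y hx hy => simp only [map_add, hx, hy, TensorProduct.tmul_add]

end Main2


/-- `f ↦ S(f·Q^{-1})` is a coalgebra isomorphism
`(O(H)_ψ)^{cop} ≅ O(H)_{ψ^{-1}}`. -/
theorem cop_twist_iso (k A : Type*) [Field k] [CommRing A] [HopfAlgebra k A]
    (ψ ψ' : A ⊗[k] A) (hψ : IsDrinfeldTwist k ψ)
    (h1 : ψ * ψ' = 1) (h2 : ψ' * ψ = 1)
    (Q Q' : A)
    (hQ : Q = LinearMap.mul' k A
      ((LinearMap.rTensor A (HopfAlgebra.antipode (R := k))) ψ))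
    (hQ1 : Q * Q' = 1) (hQ2 : Q' * Q = 1)
    (T : A →ₗ[k] A)
    (hT : T = (HopfAlgebra.antipode (R := k)) ∘ₗ LinearMap.mulRight k Q') :
    Function.Bijective T ∧
    (∀ f : A,
      Coalgebra.comul (R := k) (T f) * ψ' =
        (TensorProduct.map T T)
          ((TensorProduct.comm k A A) (Coalgebra.comul (R := k) f * ψ))) ∧
    (∀ f : A, Coalgebra.counit (R := k) (T f) = Coalgebra.counit (R := k) f) := by
  have hTf : ∀ f : A, T f = HopfAlgebra.antipode (R := k) (f * Q') := by
    intro f; rw [hT]; simp [LinearMap.mulRight_apply]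
  -- φ values
  have hφψ : phiA ψ = Q := by rw [hQ]; exact phiA_eq ψ
  have hφψ' : phiA ψ' = Q' := by
    have h := map_mul phiA ψ' ψ
    rw [h2, map_one, hφψ] at h
    calc phiA ψ' = phiA ψ' * (Q * Q') := by rw [hQ1, mul_one]
      _ = (phiA ψ' * Q) * Q' := by ring
      _ = Q' := by rw [← h, one_mul]
  have hEψ : TensorProduct.map (Coalgebra.counit (R := k) (A := A)) LinearMap.id ψ
      = (1 : k) ⊗ₜ[k] (1 : A) := by
    have h := hψ.2.2.1
    have h' := congrArg (TensorProduct.lid k A).symm h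
    rw [LinearEquiv.symm_apply_apply, TensorProduct.lid_symm_apply] at h'
    exact h'
  have hεQ : Coalgebra.counit (R := k) Q = 1 := by
    have key : ∀ w : A ⊗[k] A, Coalgebra.counit (R := k) (phiA w)
        = LinearMap.mul' k k (TensorProduct.map (Coalgebra.counit (R := k) (A := A))
            (Coalgebra.counit (R := k) (A := A)) w) := by
      intro w
      induction w using TensorProduct.induction_on with
      | zero => simp
      | tmul x y =>
        simp [phiA, Sa, Algebra.TensorProduct.lift_tmul, LinearMap.mul'_apply,
          counit_antipode' (k := k) x]
      | add x y hx hy => simp only [map_add, hx, hy]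
    have h := key ψ
    rw [hφψ] at h
    rw [h]
    have split : TensorProduct.map (Coalgebra.counit (R := k) (A := A))
        (Coalgebra.counit (R := k) (A := A)) ψ
        = TensorProduct.map LinearMap.id (Coalgebra.counit (R := k) (A := A))
          (TensorProduct.map (Coalgebra.counit (R := k) (A := A)) LinearMap.id ψ) := by
      rw [← LinearMap.comp_apply, ← TensorProduct.map_comp]; simp
    rw [split, hEψ]
    simp [LinearMap.mul'_apply]
  have hεQ' : Coalgebra.counit (R := k) Q' = 1 := by
    have h : Coalgebra.counit (R := k) Q * Coalgebra.counit (R := k) Q' = 1 := by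
      rw [← Bialgebra.counit_mul, hQ1, Bialgebra.counit_one]
    rw [hεQ, one_mul] at h
    exact h
  -- cocycle consequences
  have hc := hψ.2.1
  have Iβ : Q ⊗ₜ[k] (1:A) = gamA ψ * ψ := by
    have l : betA ((Algebra.TensorProduct.assoc k k k A A A)
        ((LinearMap.rTensor A (Coalgebra.comul (R := k) (A := A))) ψ * (ψ ⊗ₜ[k] (1:A))))
        = Q ⊗ₜ[k] (1:A) := by
      rw [map_mul, map_mul, betA_rTensor, betA_assoc, hφψ]
      have v : TensorProduct.map ((Algebra.linearMap k A) ∘ₗ (Coalgebra.counit (R := k) (A := A)))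
          LinearMap.id ψ = 1 := by
        have split : TensorProduct.map ((Algebra.linearMap k A) ∘ₗ (Coalgebra.counit (R := k) (A := A))) LinearMap.id ψ
            = TensorProduct.map (Algebra.linearMap k A) LinearMap.id
              (TensorProduct.map (Coalgebra.counit (R := k) (A := A)) LinearMap.id ψ) := by
          rw [← LinearMap.comp_apply, ← TensorProduct.map_comp]; simp
        rw [split, hEψ]
        simp [Algebra.TensorProduct.one_def]
      rw [v, one_mul]
    have r : betA ((LinearMap.lTensor A (Coalgebra.comul (R := k) (A := A))) ψ * ((1:A) ⊗ₜ[k] ψ))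
        = gamA ψ * ψ := by
      rw [map_mul, betA_lTensor, betA_tmul]
      simp only [antipode_one' (k := k) (A := A)]
      rw [← Algebra.TensorProduct.one_def, one_mul]
    rw [← l, hc, r]
  have Iα : (Bialgebra.comulAlgHom k A) Q * sigA ψ = ((1:A) ⊗ₜ[k] Q) * gamA ψ := by
    have l : alpA ((Algebra.TensorProduct.assoc k k k A A A)
        ((LinearMap.rTensor A (Coalgebra.comul (R := k) (A := A))) ψ * (ψ ⊗ₜ[k] (1:A))))
        = (Bialgebra.comulAlgHom k A) Q * sigA ψ := by
      rw [map_mul, map_mul, alpA_rTensor, alpA_assoc, hφψ, Bialgebra.comul_one, mul_one]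
    have r : alpA ((LinearMap.lTensor A (Coalgebra.comul (R := k) (A := A))) ψ * ((1:A) ⊗ₜ[k] ψ))
        = ((1:A) ⊗ₜ[k] Q) * gamA ψ := by
      rw [map_mul, alpA_lTensor, alpA_tmul, hφψ]
      simp only [antipode_one' (k := k) (A := A)]
      rw [← Algebra.TensorProduct.one_def, one_mul]
    rw [← l, hc, r]
  have hW : gamA ψ = (Q ⊗ₜ[k] (1:A)) * ψ' := by
    calc gamA ψ = gamA ψ * (ψ * ψ') := by rw [h1, mul_one]
      _ = (gamA ψ * ψ) * ψ' := by ring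
      _ = (Q ⊗ₜ[k] (1:A)) * ψ' := by rw [← Iβ]
  have I : (Bialgebra.comulAlgHom k A) Q * sigA ψ = (Q ⊗ₜ[k] Q) * ψ' := by
    rw [Iα, hW]
    have h12 : ((1:A) ⊗ₜ[k] Q) * (Q ⊗ₜ[k] (1:A)) = Q ⊗ₜ[k] Q := by
      rw [Algebra.TensorProduct.tmul_mul_tmul, one_mul, mul_one]
    calc ((1:A) ⊗ₜ[k] Q) * ((Q ⊗ₜ[k] (1:A)) * ψ')
        = (((1:A) ⊗ₜ[k] Q) * (Q ⊗ₜ[k] (1:A))) * ψ' := by ring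
      _ = (Q ⊗ₜ[k] Q) * ψ' := by rw [h12]
  have II : (Bialgebra.comulAlgHom k A) (HopfAlgebra.antipode (R := k) Q) * ψ
      = ((HopfAlgebra.antipode (R := k) Q) ⊗ₜ[k] (HopfAlgebra.antipode (R := k) Q)) * sigA ψ' := by
    have h := congrArg sigA I
    rw [map_mul, map_mul, sigA_sigA] at h
    have e1 : sigA ((Bialgebra.comulAlgHom k A) Q)
        = (Bialgebra.comulAlgHom k A) (HopfAlgebra.antipode (R := k) Q) := by
      simp only [Bialgebra.comulAlgHom_apply]
      exact sigA_comul Q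
    rw [e1, sigA_tmul] at h
    exact h
  have hSQ : HopfAlgebra.antipode (R := k) Q' * HopfAlgebra.antipode (R := k) Q = 1 := by
    rw [← antipode_mul', hQ2, antipode_one']
  have III : (Bialgebra.comulAlgHom k A) (HopfAlgebra.antipode (R := k) Q') * ψ'
      = ((HopfAlgebra.antipode (R := k) Q') ⊗ₜ[k] (HopfAlgebra.antipode (R := k) Q')) * sigA ψ := by
    have hb : ((Bialgebra.comulAlgHom k A) (HopfAlgebra.antipode (R := k) Q') * ψ')
        * ((Bialgebra.comulAlgHom k A) (HopfAlgebra.antipode (R := k) Q) * ψ) = 1 := by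
      calc ((Bialgebra.comulAlgHom k A) (HopfAlgebra.antipode (R := k) Q') * ψ')
          * ((Bialgebra.comulAlgHom k A) (HopfAlgebra.antipode (R := k) Q) * ψ)
          = ((Bialgebra.comulAlgHom k A) (HopfAlgebra.antipode (R := k) Q')
            * (Bialgebra.comulAlgHom k A) (HopfAlgebra.antipode (R := k) Q)) * (ψ' * ψ) := by ring
        _ = 1 := by rw [← map_mul, hSQ, map_one, h2, mul_one]
    have hc2 : ((((HopfAlgebra.antipode (R := k) Q') ⊗ₜ[k] (HopfAlgebra.antipode (R := k) Q'))
        * sigA ψ)) * ((Bialgebra.comulAlgHom k A) (HopfAlgebra.antipode (R := k) Q) * ψ) = 1 := by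
      rw [II]
      calc (((HopfAlgebra.antipode (R := k) Q') ⊗ₜ[k] (HopfAlgebra.antipode (R := k) Q')) * sigA ψ)
          * (((HopfAlgebra.antipode (R := k) Q) ⊗ₜ[k] (HopfAlgebra.antipode (R := k) Q)) * sigA ψ')
          = (((HopfAlgebra.antipode (R := k) Q') ⊗ₜ[k] (HopfAlgebra.antipode (R := k) Q'))
            * ((HopfAlgebra.antipode (R := k) Q) ⊗ₜ[k] (HopfAlgebra.antipode (R := k) Q)))
            * (sigA ψ * sigA ψ') := by ring
        _ = 1 := by
          rw [Algebra.TensorProduct.tmul_mul_tmul, hSQ, ← map_mul, h1, map_one, mul_one,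
            ← Algebra.TensorProduct.one_def]
    calc (Bialgebra.comulAlgHom k A) (HopfAlgebra.antipode (R := k) Q') * ψ'
        = ((Bialgebra.comulAlgHom k A) (HopfAlgebra.antipode (R := k) Q') * ψ')
          * (((((HopfAlgebra.antipode (R := k) Q') ⊗ₜ[k] (HopfAlgebra.antipode (R := k) Q'))
            * sigA ψ)) * ((Bialgebra.comulAlgHom k A) (HopfAlgebra.antipode (R := k) Q) * ψ)) := by
          rw [hc2, mul_one]
      _ = ((((HopfAlgebra.antipode (R := k) Q') ⊗ₜ[k] (HopfAlgebra.antipode (R := k) Q'))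
            * sigA ψ)) * (((Bialgebra.comulAlgHom k A) (HopfAlgebra.antipode (R := k) Q') * ψ')
          * ((Bialgebra.comulAlgHom k A) (HopfAlgebra.antipode (R := k) Q) * ψ)) := by ring
      _ = (((HopfAlgebra.antipode (R := k) Q') ⊗ₜ[k] (HopfAlgebra.antipode (R := k) Q')) * sigA ψ) := by
          rw [hb, mul_one]
  have comm_comm : ∀ X : A ⊗[k] A,
      (TensorProduct.comm k A A) ((TensorProduct.comm k A A) X) = X := by
    intro X
    induction X using TensorProduct.induction_on with
    | zero => simp
    | tmul x y => simp
    | add x y hx hy => simp only [map_add, hx, hy]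
  have LT : ∀ w : A ⊗[k] A, TensorProduct.map T T w
      = sigA ((TensorProduct.comm k A A) w * (Q' ⊗ₜ[k] Q')) := by
    intro w
    induction w using TensorProduct.induction_on with
    | zero => simp
    | tmul x y =>
      rw [TensorProduct.map_tmul, TensorProduct.comm_tmul, Algebra.TensorProduct.tmul_mul_tmul,
        sigA_tmul, hTf, hTf]
    | add x y hx hy => simp only [map_add, hx, hy, add_mul]
  refine ⟨?_, ?_, ?_⟩
  · -- bijectivity
    refine Function.bijective_iff_has_inverse.mpr
      ⟨fun x => HopfAlgebra.antipode (R := k) x * Q, fun x => ?_, fun x => ?_⟩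
    · dsimp only
      rw [hTf, antipode_antipode', mul_assoc, hQ2, mul_one]
    · dsimp only
      rw [hTf, mul_assoc, hQ1, mul_one, antipode_antipode']
  · -- comultiplication
    intro f
    rw [hTf, antipode_mul', Bialgebra.comul_mul, LT, comm_comm]
    rw [map_mul, map_mul, sigA_tmul]
    have e1 : sigA (Coalgebra.comul (R := k) f)
        = Coalgebra.comul (R := k) (HopfAlgebra.antipode (R := k) f) := sigA_comul f
    rw [e1]
    have III' : Coalgebra.comul (R := k) (HopfAlgebra.antipode (R := k) Q') * ψ'
        = ((HopfAlgebra.antipode (R := k) Q') ⊗ₜ[k] (HopfAlgebra.antipode (R := k) Q')) * sigA ψ := by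
      have := III
      simp only [Bialgebra.comulAlgHom_apply] at this
      exact this
    calc Coalgebra.comul (R := k) (HopfAlgebra.antipode (R := k) f)
          * Coalgebra.comul (R := k) (HopfAlgebra.antipode (R := k) Q') * ψ'
        = Coalgebra.comul (R := k) (HopfAlgebra.antipode (R := k) f)
          * (Coalgebra.comul (R := k) (HopfAlgebra.antipode (R := k) Q') * ψ') := by ring
      _ = Coalgebra.comul (R := k) (HopfAlgebra.antipode (R := k) f)
          * (((HopfAlgebra.antipode (R := k) Q') ⊗ₜ[k] (HopfAlgebra.antipode (R := k) Q')) * sigA ψ) := by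
          rw [III']
      _ = Coalgebra.comul (R := k) (HopfAlgebra.antipode (R := k) f) * sigA ψ
          * ((HopfAlgebra.antipode (R := k) Q') ⊗ₜ[k] (HopfAlgebra.antipode (R := k) Q')) := by ring
  · -- counit
    intro f
    rw [hTf, counit_antipode', Bialgebra.counit_mul, hεQ', mul_one]
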